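/- arXiv:2104.08026 — 2 statements merged into one kernel-verified Lean document; each statement's English description precedes it below -/
import Mathlib

section
/- Let A ∈ ℝ^{m×n} and M ∈ ℝ^{n×d}, and set C = AM. If (n/d)·CCᵀ ⪰ (1-ε)·AAᵀ for some ε ∈ (0,1), then the column span of C equals the column span of A, and in particular rank(C) = rank(A). -/
open Matrix

noncomputable def frobSq {m n : ℕ} (A : Matrix (Fin m) (Fin n) ℝ) : ℝ :=
  ∑ i, ∑ j, (A i j)^2

noncomputable def svalSq {m n : ℕ} (A : Matrix (Fin m) (Fin n) ℝ) (i : Fin n) : ℝ :=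
  let eigs := (Matrix.isHermitian_conjTranspose_mul_self A).eigenvalues
  eigs (Tuple.sort eigs i.rev)

noncomputable def specNorm {m n : ℕ} (A : Matrix (Fin m) (Fin n) ℝ) : ℝ :=
  ‖LinearMap.toContinuousLinearMap (Matrix.toEuclideanLin A)‖

def colSpan {m n : ℕ} (A : Matrix (Fin m) (Fin n) ℝ) : Submodule ℝ (Fin m → ℝ) :=
  LinearMap.range A.mulVecLin

def IsProjOnto {m : ℕ} (P : Matrix (Fin m) (Fin m) ℝ) (K : Submodule ℝ (Fin m → ℝ)) : Prop :=
  Pᵀ = P ∧ P * P = P ∧ LinearMap.range P.mulVecLin = K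

noncomputable def enorm' {n : ℕ} (x : Fin n → ℝ) : ℝ := Real.sqrt (∑ i, (x i)^2)

theorem stmt1 {m n d : ℕ} (ε : ℝ) (hε : ε ∈ Set.Ioo (0:ℝ) 1)
    (A : Matrix (Fin m) (Fin n) ℝ) (M : Matrix (Fin n) (Fin d) ℝ)
    (C : Matrix (Fin m) (Fin d) ℝ) (hC : C = A * M)
    (hpsd : (((n : ℝ)/d) • (C * Cᵀ) - (1 - ε) • (A * Aᵀ)).PosSemidef) :
    colSpan C = colSpan A ∧ C.rank = A.rank := by
  have hsub : colSpan C ≤ colSpan A := by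
    rintro x ⟨y, rfl⟩
    exact ⟨M.mulVecLin y, by simp [hC, Matrix.mulVecLin_mul]⟩
  -- kernel inclusion: Cᵀ x = 0 → Aᵀ x = 0
  have hker : ∀ x : Fin m → ℝ, Cᵀ.mulVec x = 0 → Aᵀ.mulVec x = 0 := by
    intro x hx
    have h := hpsd.dotProduct_mulVec_nonneg x
    have hCC : x ⬝ᵥ (C * Cᵀ).mulVec x = (Cᵀ.mulVec x) ⬝ᵥ (Cᵀ.mulVec x) := by
      rw [← Matrix.mulVec_mulVec, Matrix.dotProduct_mulVec, Matrix.mulVec_transpose]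
    have hAA : x ⬝ᵥ (A * Aᵀ).mulVec x = (Aᵀ.mulVec x) ⬝ᵥ (Aᵀ.mulVec x) := by
      rw [← Matrix.mulVec_mulVec, Matrix.dotProduct_mulVec, Matrix.mulVec_transpose]
    simp only [star_trivial, Matrix.sub_mulVec, Matrix.smul_mulVec,
      dotProduct_sub, dotProduct_smul, smul_eq_mul] at h
    rw [hCC, hAA, hx] at h
    simp only [dotProduct_zero, mul_zero, zero_sub, neg_nonneg] at h
    have h3 : (0:ℝ) ≤ (Aᵀ.mulVec x) ⬝ᵥ (Aᵀ.mulVec x) := Finset.sum_nonneg fun i _ => mul_self_nonneg _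
    have h4 : (Aᵀ.mulVec x) ⬝ᵥ (Aᵀ.mulVec x) = 0 := by nlinarith [hε.1, hε.2]
    exact dotProduct_self_eq_zero.mp h4
  have hkerle : LinearMap.ker Cᵀ.mulVecLin ≤ LinearMap.ker Aᵀ.mulVecLin := by
    intro x hx
    exact hker x hx
  have hrank : A.rank ≤ C.rank := by
    rw [← Matrix.rank_transpose A, ← Matrix.rank_transpose C]
    unfold Matrix.rank
    have h1 := LinearMap.finrank_range_add_finrank_ker (Aᵀ.mulVecLin)
    have h2 := LinearMap.finrank_range_add_finrank_ker (Cᵀ.mulVecLin)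
    have h3 : Module.finrank ℝ (LinearMap.ker Cᵀ.mulVecLin) ≤
        Module.finrank ℝ (LinearMap.ker Aᵀ.mulVecLin) := Submodule.finrank_mono hkerle
    omega
  have hcs : colSpan C = colSpan A := by
    apply Submodule.eq_of_le_of_finrank_le hsub
    exact hrank
  exact ⟨hcs, by rw [show C.rank = Module.finrank ℝ (colSpan C) from rfl,
    show A.rank = Module.finrank ℝ (colSpan A) from rfl, hcs]⟩
end

section
/- Let A, C ∈ ℝ^{m×n} with C = AM for M ∈ ℝ^{n×d}, and suppose σ_min(C)² ≥ 4(1+δ)²(m/ε)σ_c² where the column span of C equals that of A. Let G ∈ ℝ^{m×d} satisfy ‖G‖₂ ≤ (1+δ)σ_c(√m + √d), and set C̃ = C + G. If additionally √m + √d ≤ 2√m, then ‖(I-P_{C̃})A‖_F² ≤ ε‖A‖_F². -/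
open Matrix

open scoped RealInnerProductSpace

namespace Aux16

lemma inner_euclid {d : ℕ} (x y : EuclideanSpace ℝ (Fin d)) :
    ⟪x, y⟫ = ∑ i, x i * y i := by
  simp [PiLp.inner_apply, RCLike.inner_apply, conj_trivial]
  exact Finset.sum_congr rfl (fun _ _ => mul_comm _ _)

lemma norm_sq_eq {d : ℕ} (x : EuclideanSpace ℝ (Fin d)) : ‖x‖^2 = ∑ i, x i ^2 := by
  rw [EuclideanSpace.norm_eq, Real.sq_sqrt (by positivity)]
  simp [Real.norm_eq_abs, sq_abs]

lemma dp_self {m d : ℕ} (M : Matrix (Fin m) (Fin d) ℝ) (x : Fin d → ℝ) :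
    (M *ᵥ x) ⬝ᵥ (M *ᵥ x) = x ⬝ᵥ ((Mᵀ * M) *ᵥ x) := by
  rw [← mulVec_mulVec, dotProduct_mulVec x Mᵀ, vecMul_transpose]

lemma eig_ge {m d r : ℕ} (hr : 0 < r) (hrd : r ≤ d)
    (C : Matrix (Fin m) (Fin d) ℝ) (hrank : C.rank = r) (i : Fin d)
    (hi : (Matrix.isHermitian_conjTranspose_mul_self C).eigenvalues i ≠ 0) :
    svalSq C ⟨r-1, by omega⟩ ≤ (Matrix.isHermitian_conjTranspose_mul_self C).eigenvalues i := by
  set hB := Matrix.isHermitian_conjTranspose_mul_self C with hBdef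
  set eigs := hB.eigenvalues with heigs
  set σ := Tuple.sort eigs with hσ
  have mono : Monotone (eigs ∘ σ) := Tuple.monotone_sort eigs
  have nonneg : ∀ j, 0 ≤ eigs j := fun j =>
    (Matrix.posSemidef_conjTranspose_mul_self C).eigenvalues_nonneg j
  have hcard : Fintype.card {j // eigs j ≠ 0} = r := by
    rw [← hB.rank_eq_card_non_zero_eigs, Matrix.conjTranspose_eq_transpose_of_trivial, Matrix.rank_transpose_mul_self, hrank]
  have hsval : svalSq C ⟨r-1, by omega⟩ = eigs (σ ⟨d - r, by omega⟩) := by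
    have : ((⟨r-1, by omega⟩ : Fin d).rev) = ⟨d - r, by omega⟩ := by
      ext; simp [Fin.val_rev]; omega
    simp [svalSq, ← heigs, ← hσ, this]
    rfl
  rw [hsval]
  set j₀ := σ.symm i with hj₀
  have hfj₀ : eigs (σ j₀) = eigs i := by rw [hj₀, Equiv.apply_symm_apply]
  have hle : d - r ≤ (j₀ : ℕ) := by
    by_contra hlt
    push_neg at hlt
    -- j₀ < d - r; build injection Fin (r+1) → {j // eigs j ≠ 0}
    have hinj : Function.Injective (fun k : Fin (r+1) =>
        (⟨σ ⟨j₀ + k, by omega⟩, by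
          have h1 : eigs (σ j₀) ≤ eigs (σ ⟨j₀ + k, by omega⟩) := by
            apply mono
            simp [Fin.le_def]
          have h2 : 0 < eigs (σ j₀) := lt_of_le_of_ne (nonneg _) (by
            rw [hfj₀]; exact (Ne.symm hi))
          exact ne_of_gt (lt_of_lt_of_le h2 h1)⟩ : {j // eigs j ≠ 0})) := by
      intro k₁ k₂ h
      simp only [Subtype.mk.injEq] at h
      have := σ.injective h
      have : (j₀ : ℕ) + k₁ = j₀ + k₂ := congrArg Fin.val this
      ext; omega
    have := Fintype.card_le_of_injective _ hinj
    rw [hcard, Fintype.card_fin] at this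
    omega
  have : eigs (σ ⟨d - r, by omega⟩) ≤ eigs (σ j₀) := by
    apply mono
    simp [Fin.le_def, hle]
  rw [hfj₀] at this
  exact this

lemma coercive {m d r : ℕ} (hr : 0 < r) (hrd : r ≤ d)
    (C : Matrix (Fin m) (Fin d) ℝ) (hrank : C.rank = r)
    (v : EuclideanSpace ℝ (Fin d))
    (hv : v ∈ (LinearMap.ker (Matrix.toEuclideanLin C))ᗮ) :
    svalSq C ⟨r-1, by omega⟩ * ∑ i, v i ^ 2 ≤ ∑ i, (C *ᵥ (v : Fin d → ℝ)) i ^ 2 := by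
  set hB := Matrix.isHermitian_conjTranspose_mul_self C with hBdef
  set eigs := hB.eigenvalues with heigs
  set b := hB.eigenvectorBasis with hbdef
  have hBsym : (Cᵀ * C)ᵀ = Cᵀ * C := by
    rw [Matrix.transpose_mul, Matrix.transpose_transpose]
  have hCTC : Cᴴ = Cᵀ := Matrix.conjTranspose_eq_transpose_of_trivial C
  have dp_shift : ∀ (x y : Fin d → ℝ), x ⬝ᵥ ((Cᵀ * C) *ᵥ y) = ((Cᵀ * C) *ᵥ x) ⬝ᵥ y := by
    intro x y
    rw [Matrix.dotProduct_mulVec]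
    conv_lhs => rw [← hBsym]
    rw [Matrix.vecMul_transpose]
  have mulvec_b : ∀ i, (Cᵀ * C) *ᵥ (b i : Fin d → ℝ) = eigs i • (b i : Fin d → ℝ) := by
    intro i
    have h : (Cᴴ * C) *ᵥ (b i : Fin d → ℝ) = eigs i • (b i : Fin d → ℝ) := hB.mulVec_eigenvectorBasis i
    rw [hCTC] at h
    exact h
  have hbi : ∀ i, ⟪b i, (WithLp.toLp 2 ((Cᵀ * C) *ᵥ (v : Fin d → ℝ)) : EuclideanSpace ℝ (Fin d))⟫
      = eigs i * ⟪b i, v⟫ := by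
    intro i
    rw [inner_euclid, inner_euclid]
    have : ∑ j, (b i : Fin d → ℝ) j * ((Cᵀ * C) *ᵥ (v : Fin d → ℝ)) j
        = (b i : Fin d → ℝ) ⬝ᵥ ((Cᵀ * C) *ᵥ (v : Fin d → ℝ)) := rfl
    rw [this, dp_shift, mulvec_b, smul_dotProduct]
    simp [dotProduct, Finset.mul_sum]
  have hker : ∀ i, eigs i = 0 → ⟪(b i : EuclideanSpace ℝ (Fin d)), v⟫ = 0 := by
    intro i h0
    have hCb : C *ᵥ (b i : Fin d → ℝ) = 0 := by
      have h1 : (C *ᵥ (b i : Fin d → ℝ)) ⬝ᵥ (C *ᵥ (b i : Fin d → ℝ)) = 0 := by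
        rw [dp_self, mulvec_b, h0]
        simp
      exact (dotProduct_self_eq_zero).mp h1
    have hmem : (b i : EuclideanSpace ℝ (Fin d)) ∈ LinearMap.ker (Matrix.toEuclideanLin C) := by
      rw [LinearMap.mem_ker, Matrix.toEuclideanLin_apply]
      ext j
      have := congrFun hCb j
      simpa using this
    exact hv _ hmem
  have hnorm : ∑ i, v i ^ 2 = ∑ i, ⟪(b i : EuclideanSpace ℝ (Fin d)), v⟫ ^ 2 := by
    have h := b.sum_inner_mul_inner v v
    rw [inner_euclid] at h
    rw [show ∑ i, v i ^ 2 = ∑ i, v i * v i from by simp [sq]]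
    rw [← h]
    apply Finset.sum_congr rfl
    intro i _
    rw [real_inner_comm v (b i), sq]
  have hquad : ∑ i, (C *ᵥ (v : Fin d → ℝ)) i ^ 2
      = ∑ i, eigs i * ⟪(b i : EuclideanSpace ℝ (Fin d)), v⟫ ^ 2 := by
    have h1 : ∑ i, (C *ᵥ (v : Fin d → ℝ)) i ^ 2
        = (C *ᵥ (v : Fin d → ℝ)) ⬝ᵥ (C *ᵥ (v : Fin d → ℝ)) := by
      simp [dotProduct, sq]
    rw [h1, dp_self]
    have h2 : (v : Fin d → ℝ) ⬝ᵥ ((Cᵀ * C) *ᵥ (v : Fin d → ℝ))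
        = ⟪v, (WithLp.toLp 2 ((Cᵀ * C) *ᵥ (v : Fin d → ℝ)) : EuclideanSpace ℝ (Fin d))⟫ := by
      rw [inner_euclid]; rfl
    rw [h2, ← b.sum_inner_mul_inner v _]
    apply Finset.sum_congr rfl
    intro i _
    rw [hbi i, real_inner_comm v (b i)]
    ring
  rw [hnorm, hquad, Finset.mul_sum]
  apply Finset.sum_le_sum
  intro i _
  by_cases h0 : eigs i = 0
  · rw [h0, hker i h0]
    simp
  · exact mul_le_mul_of_nonneg_right (eig_ge hr hrd C hrank i h0) (sq_nonneg _)

lemma proj_contract {m : ℕ} (P : Matrix (Fin m) (Fin m) ℝ) (hPt : Pᵀ = P) (hPP : P * P = P)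
    (x : Fin m → ℝ) : ∑ i, ((1 - P) *ᵥ x) i ^ 2 ≤ ∑ i, x i ^ 2 := by
  have hnn : 0 ≤ x ⬝ᵥ (P *ᵥ x) := by
    have h := dp_self P x
    rw [hPt, hPP] at h
    rw [← h]
    exact Finset.sum_nonneg fun i _ => mul_self_nonneg _
  have h1 : (1 - P)ᵀ * (1 - P) = 1 - P := by
    rw [Matrix.transpose_sub, Matrix.transpose_one, hPt, Matrix.sub_mul, Matrix.mul_sub,
      Matrix.mul_sub, hPP]
    simp
  calc ∑ i, ((1 - P) *ᵥ x) i ^ 2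
      = ((1 - P) *ᵥ x) ⬝ᵥ ((1 - P) *ᵥ x) := by simp [dotProduct, sq]
    _ = x ⬝ᵥ ((1 - P) *ᵥ x) := by rw [dp_self, h1]
    _ = x ⬝ᵥ x - x ⬝ᵥ (P *ᵥ x) := by
        rw [Matrix.sub_mulVec, dotProduct_sub, Matrix.one_mulVec]
    _ ≤ x ⬝ᵥ x := by linarith
    _ = ∑ i, x i ^ 2 := by simp [dotProduct, sq]

lemma spec_bound {m d : ℕ} (G : Matrix (Fin m) (Fin d) ℝ) (v : EuclideanSpace ℝ (Fin d)) :
    ∑ i, (G *ᵥ (v : Fin d → ℝ)) i ^ 2 ≤ (specNorm G)^2 * ∑ i, v i ^ 2 := by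
  have h := (LinearMap.toContinuousLinearMap (Matrix.toEuclideanLin G)).le_opNorm v
  have h2 : ‖LinearMap.toContinuousLinearMap (Matrix.toEuclideanLin G) v‖^2
      ≤ (specNorm G * ‖v‖)^2 := by
    apply pow_le_pow_left₀ (norm_nonneg _) h
  rw [mul_pow, norm_sq_eq, norm_sq_eq] at h2
  have h3 : ∀ i, (LinearMap.toContinuousLinearMap (Matrix.toEuclideanLin G) v : EuclideanSpace ℝ (Fin m)) i
      = (G *ᵥ (v : Fin d → ℝ)) i := fun i => rfl
  calc ∑ i, (G *ᵥ (v : Fin d → ℝ)) i ^ 2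
      = ∑ i, (LinearMap.toContinuousLinearMap (Matrix.toEuclideanLin G) v : EuclideanSpace ℝ (Fin m)) i ^ 2 := by
        apply Finset.sum_congr rfl
        intro i _
        rw [h3]
    _ ≤ (specNorm G)^2 * ∑ i, v i ^ 2 := h2

end Aux16

theorem stmt16 {m n d r : ℕ} (ε δ σc : ℝ) (hε : ε ∈ Set.Ioo (0:ℝ) 1) (hδ : δ ∈ Set.Ioo (0:ℝ) 1)
    (hσ : 0 < σc) (hr : 0 < r) (hrd : r ≤ d) (hdm : d ≤ m)
    (A : Matrix (Fin m) (Fin n) ℝ) (M : Matrix (Fin n) (Fin d) ℝ)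
    (C G Ct : Matrix (Fin m) (Fin d) ℝ) (hCAM : C = A * M) (hCt : Ct = C + G)
    (hrank : A.rank = r) (hspan : colSpan C = colSpan A)
    (hsig : 4 * (1+δ)^2 * ((m:ℝ)/ε) * σc^2 ≤ svalSq C ⟨r-1, by omega⟩)
    (hG : specNorm G ≤ (1+δ) * σc * (Real.sqrt m + Real.sqrt d))
    (hmd : Real.sqrt m + Real.sqrt d ≤ 2 * Real.sqrt m)
    (P : Matrix (Fin m) (Fin m) ℝ) (hP : IsProjOnto P (colSpan Ct)) :
    frobSq ((1 - P) * A) ≤ ε * frobSq A := by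
  obtain ⟨hε0, hε1⟩ := hε
  obtain ⟨hδ0, hδ1⟩ := hδ
  have hm : 0 < m := by omega
  obtain ⟨hPt, hPP, hPrange⟩ := hP
  set lam := svalSq C ⟨r-1, by omega⟩ with hlam
  have hrC : C.rank = r := by
    have h : C.rank = Module.finrank ℝ (colSpan C) := rfl
    rw [h, hspan]
    exact hrank
  have hGnn : (0:ℝ) ≤ specNorm G := norm_nonneg _
  have hG2 : specNorm G ^ 2 ≤ ε * lam := by
    have h1 : specNorm G ≤ (1+δ) * σc * (2 * Real.sqrt m) :=
      hG.trans (mul_le_mul_of_nonneg_left hmd (by positivity))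
    have h2 : specNorm G ^ 2 ≤ ((1+δ) * σc * (2 * Real.sqrt m))^2 :=
      pow_le_pow_left₀ hGnn h1 2
    have h3 : ((1+δ) * σc * (2 * Real.sqrt m))^2 = 4 * (1+δ)^2 * (m:ℝ) * σc^2 := by
      have hs : Real.sqrt m ^ 2 = (m:ℝ) := Real.sq_sqrt (Nat.cast_nonneg m)
      rw [mul_pow, mul_pow, mul_pow, hs]
      ring
    have h4 : 4 * (1+δ)^2 * (m:ℝ) * σc^2 = ε * (4 * (1+δ)^2 * ((m:ℝ)/ε) * σc^2) := by
      field_simp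
    calc specNorm G ^2 ≤ 4*(1+δ)^2*(m:ℝ)*σc^2 := h2.trans_eq h3
      _ = ε * (4*(1+δ)^2*((m:ℝ)/ε)*σc^2) := h4
      _ ≤ ε * lam := mul_le_mul_of_nonneg_left hsig (le_of_lt hε0)
  have hcol : ∀ j : Fin n, ∑ i, ((1 - P) *ᵥ (fun i => A i j)) i ^ 2 ≤ ε * ∑ i, (A i j)^2 := by
    intro j
    set a : Fin m → ℝ := fun i => A i j with ha
    have hamem : a ∈ colSpan C := by
      rw [hspan]
      refine ⟨Pi.single j 1, ?_⟩
      ext i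
      simp [Matrix.mulVecLin_apply, Matrix.mulVec_single, ha]
    obtain ⟨w0, hw⟩ := hamem
    set K := LinearMap.ker (Matrix.toEuclideanLin C) with hK
    set w : EuclideanSpace ℝ (Fin d) := (WithLp.toLp 2 w0) with hwdef
    set v : EuclideanSpace ℝ (Fin d) :=
      w - (K.orthogonalProjectionOnto w : EuclideanSpace ℝ (Fin d))
      with hvdef
    have hvmem : v ∈ Kᗮ := Submodule.sub_starProjection_mem_orthogonal (K := K) w
    have hker0 : C *ᵥ ((K.orthogonalProjectionOnto w : EuclideanSpace ℝ (Fin d)) : Fin d → ℝ) = 0 := by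
      have hmm := (K.orthogonalProjectionOnto w).2
      rw [hK, LinearMap.mem_ker] at hmm
      exact congrArg (⇑(WithLp.equiv 2 (Fin m → ℝ))) hmm
    have hCv : C *ᵥ (v : Fin d → ℝ) = a := by
      have hsub : C *ᵥ (v : Fin d → ℝ)
          = C *ᵥ (w : Fin d → ℝ) - C *ᵥ ((K.orthogonalProjectionOnto w : EuclideanSpace ℝ (Fin d)) : Fin d → ℝ) := by
        rw [hvdef]
        exact Matrix.mulVec_sub C _ _
      rw [hsub, hker0, sub_zero]
      exact hw
    have hPct : P *ᵥ (Ct *ᵥ (v : Fin d → ℝ)) = Ct *ᵥ (v : Fin d → ℝ) := by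
      have hmem : Ct *ᵥ (v : Fin d → ℝ) ∈ LinearMap.range P.mulVecLin := by
        rw [hPrange]
        exact ⟨v, rfl⟩
      obtain ⟨y, hy⟩ := hmem
      rw [← hy]
      show P *ᵥ (P *ᵥ y) = P *ᵥ y
      rw [Matrix.mulVec_mulVec, hPP]
    have heq : (1 - P) *ᵥ a = -((1 - P) *ᵥ (G *ᵥ (v : Fin d → ℝ))) := by
      have hasplit : a = Ct *ᵥ (v : Fin d → ℝ) - G *ᵥ (v : Fin d → ℝ) := by
        rw [← hCv, hCt, Matrix.add_mulVec]
        abel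
      rw [hasplit, Matrix.mulVec_sub]
      have hz : (1 - P) *ᵥ (Ct *ᵥ (v : Fin d → ℝ)) = 0 := by
        rw [Matrix.sub_mulVec, Matrix.one_mulVec, hPct, sub_self]
      rw [hz, zero_sub]
    have hlamv : lam * ∑ i, v i ^ 2 ≤ ∑ i, a i ^ 2 := by
      have h := Aux16.coercive hr hrd C hrC v hvmem
      rwa [hCv] at h
    have hvnn : (0:ℝ) ≤ ∑ i, v i ^ 2 := Finset.sum_nonneg fun i _ => sq_nonneg _
    calc ∑ i, ((1 - P) *ᵥ a) i ^ 2
        = ∑ i, ((1 - P) *ᵥ (G *ᵥ (v : Fin d → ℝ))) i ^ 2 := by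
          rw [heq]; simp
      _ ≤ ∑ i, (G *ᵥ (v : Fin d → ℝ)) i ^ 2 := Aux16.proj_contract P hPt hPP _
      _ ≤ specNorm G ^ 2 * ∑ i, v i ^ 2 := Aux16.spec_bound G v
      _ ≤ (ε * lam) * ∑ i, v i ^ 2 := mul_le_mul_of_nonneg_right hG2 hvnn
      _ = ε * (lam * ∑ i, v i ^ 2) := by ring
      _ ≤ ε * ∑ i, a i ^ 2 := mul_le_mul_of_nonneg_left hlamv (le_of_lt hε0)
  have hframe : frobSq ((1 - P) * A) = ∑ j, ∑ i, ((1 - P) *ᵥ (fun i => A i j)) i ^ 2 := by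
    rw [frobSq, Finset.sum_comm]
    apply Finset.sum_congr rfl
    intro j _
    apply Finset.sum_congr rfl
    intro i _
    rfl
  rw [hframe]
  calc ∑ j, ∑ i, ((1 - P) *ᵥ (fun i => A i j)) i ^ 2
      ≤ ∑ j, ε * ∑ i, (A i j)^2 := Finset.sum_le_sum fun j _ => hcol j
    _ = ε * frobSq A := by
        rw [← Finset.mul_sum, frobSq, Finset.sum_comm]
end
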